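/- arXiv:0807.3295 — 6 statements merged into one kernel-verified Lean document; each statement's English description precedes it below -/
import Mathlib

section
/- Let R be a Prüfer domain and let X, Y₁, Y₂ be invertible ideals of R contained in R with X ⊇ Y₁Y₂. Then X = X₁X₂ for some invertible ideals X₁, X₂ with X₁ ⊇ Y₁ and X₂ ⊇ Y₂. -/
open scoped nonZeroDivisors

/-- An ideal `I` of a domain `R` is invertible if it becomes a unit as a fractional ideal. -/
def IsInvertibleIdeal (R : Type*) [CommRing R] [IsDomain R] (I : Ideal R) : Prop :=
  ∃ J : FractionalIdeal R⁰ (FractionRing R), (I : FractionalIdeal R⁰ (FractionRing R)) * J = 1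

/-- `R` is a Prüfer domain if every nonzero finitely generated ideal is invertible. -/
def IsPruferDomain (R : Type*) [CommRing R] [IsDomain R] : Prop :=
  ∀ I : Ideal R, I ≠ ⊥ → I.FG → IsInvertibleIdeal R I

/-!
Take `X₁ = X + Y₁`. It is finitely generated and nonzero, hence invertible because `R` is
Prüfer, and it contains `X`; for invertible ideals containment means divisibility, so
`X = X₁ X₂` with `X₂ = X₁⁻¹ X` an ideal of `R`, invertible as a factor of `X`.
Finally `X₁ Y₂ = X Y₂ + Y₁ Y₂ ≤ X = X₁ X₂`, and cancelling the invertible `X₁` gives `Y₂ ≤ X₂`.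
-/

namespace IsInvertibleIdeal

variable {R : Type*} [CommRing R] [IsDomain R]

theorem iff_isUnit {I : Ideal R} :
    IsInvertibleIdeal R I ↔ IsUnit (I : FractionalIdeal R⁰ (FractionRing R)) :=
  ⟨fun ⟨J, hJ⟩ => .of_mul_eq_one J hJ, fun h => ⟨_, h.mul_val_inv⟩⟩

theorem fg {I : Ideal R} (hI : IsInvertibleIdeal R I) : I.FG :=
  Ideal.fg_of_isUnit (IsFractionRing.injective R (FractionRing R)) I (iff_isUnit.mp hI)

theorem ne_bot {I : Ideal R} (hI : IsInvertibleIdeal R I) : I ≠ ⊥ := by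
  rintro rfl
  simpa using iff_isUnit.mp hI

theorem of_mul_right {I J : Ideal R} (hIJ : IsInvertibleIdeal R (I * J)) :
    IsInvertibleIdeal R J := by
  rw [iff_isUnit, FractionalIdeal.coeIdeal_mul] at hIJ
  exact iff_isUnit.mpr (isUnit_of_mul_isUnit_right hIJ)

theorem mul_le_mul_left_iff {I A B : Ideal R} (hI : IsInvertibleIdeal R I) :
    I * A ≤ I * B ↔ A ≤ B := by
  refine ⟨fun hle => ?_, fun hle => Ideal.mul_mono_right hle⟩
  obtain ⟨u, hu⟩ := iff_isUnit.mp hI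
  rw [← FractionalIdeal.coeIdeal_le_coeIdeal (FractionRing R)] at hle ⊢
  rw [FractionalIdeal.coeIdeal_mul, FractionalIdeal.coeIdeal_mul, ← hu] at hle
  simpa only [Units.inv_mul_cancel_left] using
    mul_le_mul_right hle (↑u⁻¹ : FractionalIdeal R⁰ (FractionRing R))

theorem exists_mul_eq_of_le {I J : Ideal R} (hI : IsInvertibleIdeal R I) (hJI : J ≤ I) :
    ∃ L : Ideal R, J = I * L := by
  obtain ⟨u, hu⟩ := iff_isUnit.mp hI
  have hle : (↑u⁻¹ : FractionalIdeal R⁰ (FractionRing R)) * J ≤ 1 := by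
    calc (↑u⁻¹ : FractionalIdeal R⁰ (FractionRing R)) * J ≤ ↑u⁻¹ * I :=
          mul_le_mul_right ((FractionalIdeal.coeIdeal_le_coeIdeal (FractionRing R)).mpr hJI) _
      _ = 1 := by rw [← hu, Units.inv_mul]
  obtain ⟨L, hL⟩ := FractionalIdeal.le_one_iff_exists_coeIdeal.mp hle
  refine ⟨L, FractionalIdeal.coeIdeal_injective (K := FractionRing R) ?_⟩
  simp only [FractionalIdeal.coeIdeal_mul, hL, ← hu, Units.mul_inv_cancel_left]

end IsInvertibleIdeal

theorem stmt8_general {R : Type*} [CommRing R] [IsDomain R] (hR : IsPruferDomain R)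
    (X Y₁ Y₂ : Ideal R) (hX : IsInvertibleIdeal R X) (hY₁ : IsInvertibleIdeal R Y₁)
    (h : Y₁ * Y₂ ≤ X) :
    ∃ X₁ X₂ : Ideal R, IsInvertibleIdeal R X₁ ∧ IsInvertibleIdeal R X₂ ∧
      X = X₁ * X₂ ∧ Y₁ ≤ X₁ ∧ Y₂ ≤ X₂ := by
  have hX₁ : IsInvertibleIdeal R (X ⊔ Y₁) :=
    hR _ (fun hbot => hX.ne_bot (eq_bot_mono le_sup_left hbot)) (Submodule.FG.sup hX.fg hY₁.fg)
  obtain ⟨X₂, hX₂⟩ := hX₁.exists_mul_eq_of_le le_sup_left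
  refine ⟨X ⊔ Y₁, X₂, hX₁, (hX₂ ▸ hX).of_mul_right, hX₂, le_sup_right, ?_⟩
  rw [← hX₁.mul_le_mul_left_iff, ← hX₂, Submodule.sup_mul]
  exact sup_le Ideal.mul_le_left h

theorem stmt8 {R : Type*} [CommRing R] [IsDomain R] (hR : IsPruferDomain R)
    (X Y₁ Y₂ : Ideal R) (hX : IsInvertibleIdeal R X) (hY₁ : IsInvertibleIdeal R Y₁)
    (hY₂ : IsInvertibleIdeal R Y₂) (h : Y₁ * Y₂ ≤ X) :
    ∃ X₁ X₂ : Ideal R, IsInvertibleIdeal R X₁ ∧ IsInvertibleIdeal R X₂ ∧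
      X = X₁ * X₂ ∧ Y₁ ≤ X₁ ∧ Y₂ ≤ X₂ :=
  stmt8_general hR X Y₁ Y₂ hX hY₁ h
end

section
/- Let R be an integral domain in which the spectrum is treed (incomparable primes are comaximal). Suppose X and Y are proper ideals each having a unique minimal prime, and X + Y ≠ R. Then XY has a unique minimal prime. -/
/-!
An ideal has a unique minimal prime exactly when its radical is prime, and
`rad (X * Y) = rad X ⊓ rad Y`. Since `rad X ⊔ rad Y` lies in the proper ideal `rad (X ⊔ Y)`,
treedness makes the primes `rad X` and `rad Y` comparable, so their meet is one of them.
-/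

namespace Ideal

variable {R : Type*} [CommRing R]

theorem existsUnique_mem_minimalPrimes_iff {I : Ideal R} :
    (∃! P, P ∈ I.minimalPrimes) ↔ I.radical.IsPrime := by
  constructor
  · rintro ⟨P, hP, hPu⟩
    have hsingleton : I.minimalPrimes = {P} := Set.eq_singleton_iff_unique_mem.mpr ⟨hP, hPu⟩
    rw [← sInf_minimalPrimes, hsingleton, sInf_singleton]
    exact hP.1.1
  · intro hprime
    rw [← radical_minimalPrimes, minimalPrimes_eq_subsingleton_self]
    exact ⟨I.radical, rfl, fun _ h => h⟩

end Ideal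

theorem stmt9_general {R : Type*} [CommRing R]
    (treed : ∀ P Q : Ideal R, P.IsPrime → Q.IsPrime → ¬P ≤ Q → ¬Q ≤ P → P ⊔ Q = ⊤)
    (X Y : Ideal R)
    (hXu : ∃! P, P ∈ X.minimalPrimes) (hYu : ∃! P, P ∈ Y.minimalPrimes)
    (hXY : X ⊔ Y ≠ ⊤) :
    ∃! P, P ∈ (X * Y).minimalPrimes := by
  rw [Ideal.existsUnique_mem_minimalPrimes_iff] at hXu hYu ⊢
  have hcomparable : X.radical ≤ Y.radical ∨ Y.radical ≤ X.radical := by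
    by_contra! h
    apply hXY
    rw [← Ideal.radical_eq_top, Ideal.radical_sup, treed _ _ hXu hYu h.1 h.2, Ideal.radical_top]
  rw [Ideal.radical_mul]
  rcases hcomparable with h | h
  · rwa [inf_eq_left.mpr h]
  · rwa [inf_eq_right.mpr h]

theorem stmt9 {R : Type*} [CommRing R] [IsDomain R]
    (treed : ∀ P Q : Ideal R, P.IsPrime → Q.IsPrime → ¬P ≤ Q → ¬Q ≤ P → P ⊔ Q = ⊤)
    (X Y : Ideal R) (hX : X ≠ ⊤) (hY : Y ≠ ⊤)
    (hXu : ∃! P, P ∈ X.minimalPrimes) (hYu : ∃! P, P ∈ Y.minimalPrimes)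
    (hXY : X ⊔ Y ≠ ⊤) :
    ∃! P, P ∈ (X * Y).minimalPrimes :=
  stmt9_general treed X Y hXu hYu hXY
end

section
/- Let R be an integral domain with Spec(R) treed, let X, Y be proper ideals with X + Y ≠ R, and let P be a prime ideal minimal over X + Y. Then P is minimal over X or P is minimal over Y. -/
/-! Choose primes `Q ⊇ X` and `Q' ⊇ Y` minimal over `X` and `Y` inside `P`. Since `Spec R` is
treed, `Q` and `Q'` are comparable, so the larger one contains `X + Y`; by minimality of `P` over
`X + Y` it equals `P`, which is therefore minimal over `X` or over `Y`. -/

namespace Ideal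

variable {R : Type*} [CommSemiring R]

theorem mem_minimalPrimes_of_sup_le_of_le {X Y P Q : Ideal R}
    (hP : P ∈ (X ⊔ Y).minimalPrimes) (hQ : Q ∈ Y.minimalPrimes) (hXQ : X ≤ Q) (hQP : Q ≤ P) :
    P ∈ Y.minimalPrimes := by
  have hPQ : P ≤ Q := hP.2 ⟨hQ.1.1, sup_le hXQ hQ.1.2⟩ hQP
  rwa [le_antisymm hPQ hQP]

end Ideal

theorem stmt10_general {R : Type*} [CommRing R]
    (treed : ∀ P Q M : Ideal R, P.IsPrime → Q.IsPrime → M.IsPrime →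
      P ≤ M → Q ≤ M → P ≤ Q ∨ Q ≤ P)
    (X Y : Ideal R)
    (P : Ideal R) (hP : P ∈ (X ⊔ Y).minimalPrimes) :
    P ∈ X.minimalPrimes ∨ P ∈ Y.minimalPrimes := by
  have hPprime : P.IsPrime := hP.1.1
  obtain ⟨Q, hQ, hQP⟩ := Ideal.exists_minimalPrimes_le (le_sup_left.trans hP.1.2)
  obtain ⟨Q', hQ', hQ'P⟩ := Ideal.exists_minimalPrimes_le (le_sup_right.trans hP.1.2)
  rcases treed Q Q' P hQ.1.1 hQ'.1.1 hPprime hQP hQ'P with hQQ' | hQ'Q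
  · exact .inr (Ideal.mem_minimalPrimes_of_sup_le_of_le hP hQ' (hQ.1.2.trans hQQ') hQ'P)
  · refine .inl (Ideal.mem_minimalPrimes_of_sup_le_of_le (X := Y) ?_ hQ (hQ'.1.2.trans hQ'Q) hQP)
    rwa [sup_comm]

theorem stmt10 {R : Type*} [CommRing R] [IsDomain R]
    (treed : ∀ P Q M : Ideal R, P.IsPrime → Q.IsPrime → M.IsPrime →
      P ≤ M → Q ≤ M → P ≤ Q ∨ Q ≤ P)
    (X Y : Ideal R) (hX : X ≠ ⊤) (hY : Y ≠ ⊤) (hXY : X ⊔ Y ≠ ⊤)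
    (P : Ideal R) (hP : P ∈ (X ⊔ Y).minimalPrimes) :
    P ∈ X.minimalPrimes ∨ P ∈ Y.minimalPrimes :=
  stmt10_general treed X Y P hP
end

section
/- Let R be an integral domain, and suppose a proper ideal X admits a factorization X = X₁⋯Xₙ where the Xᵢ are proper ideals with prime radical and are pairwise comaximal. Then this factorization is unique up to order: if X = Y₁⋯Yₘ is another such factorization, then m = n and after reordering Xᵢ = Yᵢ for all i. -/
/-!
Every prime containing `∏ Xᵢ` contains some `Xᵢ`, and by pairwise comaximality it can only be the
`Xᵢ` that is not comaximal with it. Hence if `Xᵢ ⊔ Yⱼ ≠ ⊤`, then `Xᵢ ≤ √Yⱼ`, so `Yⱼ` is comaximal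
with every `Xₖ`, `k ≠ i`, and `Xᵢ · ∏_{k ≠ i} Xₖ = ∏ Yₗ ≤ Yⱼ` forces `Xᵢ ≤ Yⱼ`; symmetrically
`Yⱼ ≤ Xᵢ`. Since each proper `Xᵢ` contains `∏ Yₗ`, it is not comaximal with some `Yⱼ`, so the two
families have the same members, and comaximality makes both of them injective.
-/

theorem Function.exists_equiv_of_injective_of_range_eq {ι κ α : Type*} {f : ι → α} {g : κ → α}
    (hf : f.Injective) (hg : g.Injective) (h : Set.range f = Set.range g) :
    ∃ e : ι ≃ κ, ∀ i, f i = g (e i) :=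
  ⟨(Equiv.ofInjective f hf).trans ((Equiv.setCongr h).trans (Equiv.ofInjective g hg).symm),
    fun i => by simp [Equiv.apply_ofInjective_symm]⟩

theorem Function.injective_of_pairwise_sup_eq_top {ι α : Type*} [SemilatticeSup α] [OrderTop α]
    {f : ι → α} (hne : ∀ i, f i ≠ ⊤) (hf : Pairwise fun i j => f i ⊔ f j = ⊤) :
    f.Injective := by
  intro i j hij
  by_contra hne_ij
  exact hne i (by simpa [hij] using hf hne_ij)

namespace Ideal

variable {R ι : Type*} [CommRing R]

theorem sup_eq_top_of_sup_radical_eq_top {I J : Ideal R} (h : I ⊔ J.radical = ⊤) : I ⊔ J = ⊤ := by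
  rw [← radical_eq_top, radical_sup]
  exact radical_eq_top.2 (top_le_iff.1 (h ▸ sup_le_sup_right le_radical _))

theorem le_of_mul_le_of_sup_eq_top {I J K : Ideal R} (hle : I * J ≤ K) (hcop : J ⊔ K = ⊤) :
    I ≤ K := by
  rw [← sup_eq_right, ← mul_sup_eq_of_coprime_right hcop, sup_eq_right.2 hle]

variable [Fintype ι]

theorem prod_univ_le {X : ι → Ideal R} (i : ι) : ∏ k, X k ≤ X i :=
  prod_le_inf.trans (Finset.inf_le (Finset.mem_univ i))

theorem le_of_prod_le_of_sup_eq_top {X : ι → Ideal R} {J : Ideal R} {i : ι}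
    (hle : ∏ k, X k ≤ J) (hcop : ∀ k ≠ i, X k ⊔ J = ⊤) : X i ≤ J := by
  classical
  refine le_of_mul_le_of_sup_eq_top (J := ∏ k ∈ Finset.univ.erase i, X k) ?_ ?_
  · rwa [Finset.mul_prod_erase _ _ (Finset.mem_univ i)]
  · rw [sup_comm]
    exact sup_prod_eq_top fun k hk => by rw [sup_comm]; exact hcop k (Finset.ne_of_mem_erase hk)

theorem exists_sup_ne_top_of_prod_le {X : ι → Ideal R} {J : Ideal R} (hJ : J ≠ ⊤)
    (hle : ∏ k, X k ≤ J) : ∃ i, J ⊔ X i ≠ ⊤ := by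
  by_contra! h
  exact hJ (by simpa [sup_eq_left.2 hle] using sup_prod_eq_top (s := Finset.univ) fun i _ => h i)

theorem IsPrime.le_of_prod_le_of_sup_ne_top {X : ι → Ideal R}
    (hX : Pairwise fun i j => X i ⊔ X j = ⊤) {P : Ideal R} (hP : P.IsPrime) (hle : ∏ k, X k ≤ P)
    {i : ι} (hi : X i ⊔ P ≠ ⊤) : X i ≤ P := by
  obtain ⟨k, -, hk⟩ := hP.prod_le.1 hle
  obtain rfl | hki := eq_or_ne k i
  · exact hk
  · exact absurd (top_le_iff.1 (hX hki.symm ▸ sup_le_sup_left hk _)) hi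

theorem le_of_prod_le_of_sup_ne_top {X : ι → Ideal R}
    (hX : Pairwise fun i j => X i ⊔ X j = ⊤) {J : Ideal R} (hJ : J.radical.IsPrime)
    (hle : ∏ k, X k ≤ J) {i : ι} (hi : X i ⊔ J ≠ ⊤) : X i ≤ J := by
  have hrad : X i ≤ J.radical := hJ.le_of_prod_le_of_sup_ne_top hX (hle.trans le_radical)
    fun h => hi (sup_eq_top_of_sup_radical_eq_top h)
  exact le_of_prod_le_of_sup_eq_top hle fun k hk =>
    sup_eq_top_of_sup_radical_eq_top (top_le_iff.1 (hX hk ▸ sup_le_sup_left hrad _))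

end Ideal

open Ideal

theorem stmt11_general {R : Type*} [CommRing R] {n m : ℕ}
    (X : Fin n → Ideal R) (Y : Fin m → Ideal R)
    (hXrad : ∀ i, (X i).radical.IsPrime) (hYrad : ∀ j, (Y j).radical.IsPrime)
    (hXcom : ∀ i j, i ≠ j → X i ⊔ X j = ⊤) (hYcom : ∀ i j, i ≠ j → Y i ⊔ Y j = ⊤)
    (hprod : (∏ i, X i) = ∏ j, Y j) :
    ∃ e : Fin n ≃ Fin m, ∀ i, X i = Y (e i) := by
  have hX : Pairwise fun i j => X i ⊔ X j = ⊤ := fun i j => hXcom i j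
  have hY : Pairwise fun i j => Y i ⊔ Y j = ⊤ := fun i j => hYcom i j
  have hXne i : X i ≠ ⊤ := fun h => (hXrad i).ne_top (radical_eq_top.2 h)
  have hYne j : Y j ≠ ⊤ := fun h => (hYrad j).ne_top (radical_eq_top.2 h)
  have heq i j (h : X i ⊔ Y j ≠ ⊤) : X i = Y j :=
    le_antisymm (le_of_prod_le_of_sup_ne_top hX (hYrad j) (hprod ▸ prod_univ_le j) h)
      (le_of_prod_le_of_sup_ne_top hY (hXrad i) (hprod ▸ prod_univ_le i) (by rwa [sup_comm]))
  refine Function.exists_equiv_of_injective_of_range_eq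
    (Function.injective_of_pairwise_sup_eq_top hXne hX)
    (Function.injective_of_pairwise_sup_eq_top hYne hY) (Set.Subset.antisymm ?_ ?_)
  · rintro _ ⟨i, rfl⟩
    obtain ⟨j, hj⟩ := exists_sup_ne_top_of_prod_le (hXne i) (hprod ▸ prod_univ_le i)
    exact ⟨j, (heq i j hj).symm⟩
  · rintro _ ⟨j, rfl⟩
    obtain ⟨i, hi⟩ := exists_sup_ne_top_of_prod_le (hYne j) (hprod.symm ▸ prod_univ_le j)
    exact ⟨i, heq i j (by rwa [sup_comm])⟩

theorem stmt11 {R : Type*} [CommRing R] [IsDomain R] {n m : ℕ}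
    (X : Fin n → Ideal R) (Y : Fin m → Ideal R)
    (hXp : ∀ i, X i ≠ ⊤) (hYp : ∀ j, Y j ≠ ⊤)
    (hXrad : ∀ i, (X i).radical.IsPrime) (hYrad : ∀ j, (Y j).radical.IsPrime)
    (hXcom : ∀ i j, i ≠ j → X i ⊔ X j = ⊤) (hYcom : ∀ i j, i ≠ j → Y i ⊔ Y j = ⊤)
    (hprod : (∏ i, X i) = ∏ j, Y j) (hproper : (∏ i, X i) ≠ ⊤) :
    ∃ e : Fin n ≃ Fin m, ∀ i, X i = Y (e i) :=
  stmt11_general X Y hXrad hYrad hXcom hYcom hprod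
end

section
/- Let R be an integral domain such that every nonzero principal proper ideal xR can be written as a product X₁⋯Xₙ of pairwise comaximal invertible ideals each having a unique minimal prime. Then Spec(R) is treed, i.e., any two incomparable primes are comaximal. -/
/-! Take `a ∈ P \ Q` and `b ∈ Q \ P` and factor `ab` into pairwise comaximal ideals `Xᵢ`. Each of
`P`, `Q` contains some factor; if `P + Q ≠ R` they must contain the same factor `Xₖ`, so the prime
`√Xₖ` lies in `P ∩ Q` and contains `ab`, hence contains `a` or `b`, which is absurd. -/

open scoped nonZeroDivisors

namespace Ideal

variable {R ι : Type*} [CommSemiring R]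

theorem exists_le_and_le_of_prod_le {s : Finset ι} {X : ι → Ideal R}
    (hX : Pairwise fun i j ↦ X i ⊔ X j = ⊤) {P Q : Ideal R} (hP : P.IsPrime) (hQ : Q.IsPrime)
    (hPQ : P ⊔ Q ≠ ⊤) (hsP : ∏ i ∈ s, X i ≤ P) (hsQ : ∏ i ∈ s, X i ≤ Q) :
    ∃ k ∈ s, X k ≤ P ∧ X k ≤ Q := by
  obtain ⟨k, hk, hkP⟩ := hP.prod_le.mp hsP
  obtain ⟨l, -, hlQ⟩ := hQ.prod_le.mp hsQ
  obtain rfl : k = l := by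
    by_contra hkl
    exact hPQ (top_le_iff.mp (hX hkl ▸ sup_le_sup hkP hlQ))
  exact ⟨k, hk, hkP, hlQ⟩

theorem exists_isPrime_le_inf_of_prod_le [Fintype ι] {X : ι → Ideal R}
    (hX : Pairwise fun i j ↦ X i ⊔ X j = ⊤) (hXrad : ∀ i, (X i).radical.IsPrime)
    {P Q : Ideal R} (hP : P.IsPrime) (hQ : Q.IsPrime) (hPQ : P ⊔ Q ≠ ⊤)
    (hXP : ∏ i, X i ≤ P) (hXQ : ∏ i, X i ≤ Q) :
    ∃ 𝔭 : Ideal R, 𝔭.IsPrime ∧ ∏ i, X i ≤ 𝔭 ∧ 𝔭 ≤ P ∧ 𝔭 ≤ Q := by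
  obtain ⟨k, -, hkP, hkQ⟩ := exists_le_and_le_of_prod_le hX hP hQ hPQ hXP hXQ
  exact ⟨(X k).radical, hXrad k,
    (le_of_dvd (Finset.dvd_prod_of_mem X (Finset.mem_univ k))).trans le_radical,
    hP.radical_le_iff.mpr hkP, hQ.radical_le_iff.mpr hkQ⟩

end Ideal

theorem stmt12 {R : Type*} [CommRing R] [IsDomain R]
    (h : ∀ x : R, x ≠ 0 → ¬IsUnit x → ∃ (n : ℕ) (X : Fin n → Ideal R),
      (∀ i, IsInvertibleIdeal R (X i)) ∧ (∀ i, (X i).radical.IsPrime) ∧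
      (∀ i j, i ≠ j → X i ⊔ X j = ⊤) ∧ Ideal.span {x} = ∏ i, X i) :
    ∀ P Q : Ideal R, P.IsPrime → Q.IsPrime → ¬P ≤ Q → ¬Q ≤ P → P ⊔ Q = ⊤ := by
  intro P Q hP hQ hPQ hQP
  by_contra hPQ_top
  obtain ⟨a, haP, haQ⟩ := Set.not_subset.mp hPQ
  obtain ⟨b, hbQ, hbP⟩ := Set.not_subset.mp hQP
  have hab0 : a * b ≠ 0 :=
    mul_ne_zero (by rintro rfl; exact haQ Q.zero_mem) (by rintro rfl; exact hbP P.zero_mem)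
  have habP : a * b ∈ P := P.mul_mem_right b haP
  have habQ : a * b ∈ Q := Q.mul_mem_left a hbQ
  obtain ⟨n, X, -, hXrad, hX, hspan⟩ :=
    h (a * b) hab0 fun hu ↦ hP.ne_top (P.eq_top_of_isUnit_mem habP hu)
  obtain ⟨𝔭, h𝔭, hX𝔭, h𝔭P, h𝔭Q⟩ :=
    Ideal.exists_isPrime_le_inf_of_prod_le (fun i j ↦ hX i j) hXrad hP hQ hPQ_top
      (hspan ▸ (Ideal.span_singleton_le_iff_mem P).mpr habP)
      (hspan ▸ (Ideal.span_singleton_le_iff_mem Q).mpr habQ)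
  have hab𝔭 : a * b ∈ 𝔭 := hX𝔭 (hspan ▸ Ideal.mem_span_singleton_self _)
  rcases h𝔭.mem_or_mem hab𝔭 with ha𝔭 | hb𝔭
  · exact haQ (h𝔭Q ha𝔭)
  · exact hbP (h𝔭P hb𝔭)
end

section
/- Let R be an integral domain with Spec(R) treed, let I = a₁R + ⋯ + aₙR be a nonzero finitely generated proper ideal, and let P be a prime containing I. Then P is a minimal prime of I if and only if P is a minimal prime of aᵢR for some i. -/
/-!
Choose for each `i` a minimal prime `Qᵢ ⊆ P` of `aᵢR`. Since the primes inside `P` form a chain,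
the finitely many `Qᵢ` have a largest member `Qⱼ`, which then contains every `aᵢ`, hence `I`;
minimality of `P` over `I` forces `P = Qⱼ`. The converse holds because `aᵢR ⊆ I`.
-/

theorem IsChain.exists_forall_le_of_finite {α ι : Type*} [Preorder α] [Finite ι] [Nonempty ι]
    {s : Set α} (hs : IsChain (· ≤ ·) s) (f : ι → α) (hf : ∀ i, f i ∈ s) :
    ∃ j, ∀ i, f i ≤ f j :=
  Directed.finite_le (f := f) (fun i k => (hs.total (hf i) (hf k)).elim
    (fun h => ⟨k, h, le_rfl⟩) (fun h => ⟨i, le_rfl, h⟩)) id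

namespace Ideal

variable {R : Type*} [CommRing R]

theorem mem_minimalPrimes_of_le_of_mem_minimalPrimes {I J P : Ideal R} (hJI : J ≤ I)
    (hIP : I ≤ P) (hP : P ∈ J.minimalPrimes) : P ∈ I.minimalPrimes := by
  simp only [Set.mem_ofPred_eq, Ideal.IsMinimalPrime] at hP ⊢
  exact hP.mono (fun _ hQ => ⟨hQ.1, hJI.trans hQ.2⟩) ⟨hP.1.1, hIP⟩

theorem exists_mem_minimalPrimes_of_mem_minimalPrimes_iSup {ι : Type*} [Finite ι] [Nonempty ι]
    {I : ι → Ideal R} {P : Ideal R} (hchain : IsChain (· ≤ ·) {Q : Ideal R | Q.IsPrime ∧ Q ≤ P})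
    (hP : P ∈ (⨆ i, I i).minimalPrimes) : ∃ i, P ∈ (I i).minimalPrimes := by
  have : P.IsPrime := hP.1.1
  choose Q hQ hQP using fun i => exists_minimalPrimes_le ((le_iSup I i).trans hP.1.2)
  obtain ⟨j, hj⟩ := hchain.exists_forall_le_of_finite Q fun i => ⟨(hQ i).1.1, hQP i⟩
  have hsup : ⨆ i, I i ≤ Q j := iSup_le fun i => (hQ i).1.2.trans (hj i)
  have hPQ : P = Q j := le_antisymm (hP.2 ⟨(hQ j).1.1, hsup⟩ (hQP j)) (hQP j)
  exact ⟨j, hPQ ▸ hQ j⟩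

end Ideal

theorem stmt13_general {R : Type*} [CommRing R]
    (treed : ∀ P Q M : Ideal R, P.IsPrime → Q.IsPrime → M.IsPrime →
      P ≤ M → Q ≤ M → P ≤ Q ∨ Q ≤ P)
    {n : ℕ} (a : Fin n → R) (I : Ideal R) (hI : I = Ideal.span (Set.range a))
    (hI0 : I ≠ ⊥)
    (P : Ideal R) (hIP : I ≤ P) :
    P ∈ I.minimalPrimes ↔ ∃ i, P ∈ (Ideal.span {a i}).minimalPrimes := by
  subst hI
  constructor
  · intro hmin
    have : Nonempty (Fin n) := by
      rw [← not_isEmpty_iff]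
      intro
      exact hI0 (by rw [Set.range_eq_empty, Ideal.span_empty])
    rw [Ideal.span_range_eq_iSup] at hmin
    exact Ideal.exists_mem_minimalPrimes_of_mem_minimalPrimes_iSup
      (fun Q hQ Q' hQ' _ => treed Q Q' P hQ.1 hQ'.1 hmin.1.1 hQ.2 hQ'.2) hmin
  · rintro ⟨i, hi⟩
    exact Ideal.mem_minimalPrimes_of_le_of_mem_minimalPrimes
      (Ideal.span_mono (Set.singleton_subset_iff.mpr ⟨i, rfl⟩)) hIP hi

theorem stmt13 {R : Type*} [CommRing R] [IsDomain R]
    (treed : ∀ P Q M : Ideal R, P.IsPrime → Q.IsPrime → M.IsPrime →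
      P ≤ M → Q ≤ M → P ≤ Q ∨ Q ≤ P)
    {n : ℕ} (a : Fin n → R) (I : Ideal R) (hI : I = Ideal.span (Set.range a))
    (hI0 : I ≠ ⊥) (hIT : I ≠ ⊤)
    (P : Ideal R) (hP : P.IsPrime) (hIP : I ≤ P) :
    P ∈ I.minimalPrimes ↔ ∃ i, P ∈ (Ideal.span {a i}).minimalPrimes :=
  stmt13_general treed a I hI hI0 P hIP
end
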